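/- Let A be a Boolean algebra with Stone space K_A, and let B ⊆ A be an irredundant subset of A. Then the family F = {χ_{[b]} : b ∈ B} of characteristic functions of the clopen sets [b] of K_A determined by the elements b ∈ B is an irredundant set in the Banach algebra C(K_A). Consequently, irr(A) ≤ bd(K_A). -/
import Mathlib


open Cardinal

/-- The Stone space of a Boolean algebra `A`: the space of Boolean homomorphisms from `A`
to `Bool` (equivalently, of ultrafilters on `A`), topologized as a subspace of the product
`A → Bool` with `Bool` discrete. -/
abbrev StoneSpace (A : Type) [BooleanAlgebra A] : Type :=
  {x : A → Bool // x ⊥ = false ∧ x ⊤ = true ∧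
    ∀ a b : A, x (a ⊓ b) = (x a && x b) ∧ x (a ⊔ b) = (x a || x b)}

/-- Membership in the Boolean subalgebra of `A` generated by a set `s`. -/
inductive InBoolSubalgebra {A : Type} [BooleanAlgebra A] (s : Set A) : A → Prop
  | base {a : A} : a ∈ s → InBoolSubalgebra s a
  | bot : InBoolSubalgebra s ⊥
  | top : InBoolSubalgebra s ⊤
  | inf {a b : A} : InBoolSubalgebra s a → InBoolSubalgebra s b → InBoolSubalgebra s (a ⊓ b)
  | sup {a b : A} : InBoolSubalgebra s a → InBoolSubalgebra s b → InBoolSubalgebra s (a ⊔ b)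
  | compl {a : A} : InBoolSubalgebra s a → InBoolSubalgebra s aᶜ

/-- A subset `B` of a Boolean algebra is irredundant if no `b ∈ B` lies in the Boolean
subalgebra generated by `B \ {b}`. -/
def IsIrredundantBA (A : Type) [BooleanAlgebra A] (B : Set A) : Prop :=
  ∀ b ∈ B, ¬ InBoolSubalgebra (B \ {b}) b

/-- `irr A`: the supremum of cardinalities of irredundant subsets of `A`. -/
noncomputable def irrBA (A : Type) [BooleanAlgebra A] : Cardinal :=
  sSup {c : Cardinal | ∃ B : Set A, IsIrredundantBA A B ∧ c = #B}

/-- A set `F ⊆ C(K)` is irredundant if no `f ∈ F` belongs to the closed (non-unital)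
subalgebra of `C(K)` generated by `F \ {f}`. -/
def IsIrredundantC (K : Type) [TopologicalSpace K] (F : Set C(K, ℝ)) : Prop :=
  ∀ f ∈ F, f ∉ closure (NonUnitalAlgebra.adjoin ℝ (F \ {f}) : Set C(K, ℝ))

/-- `bd K`: the supremum of cardinalities of irredundant subsets of `C(K)`
(equivalently, of bidiscrete systems in `K`). -/
noncomputable def bd (K : Type) [TopologicalSpace K] : Cardinal :=
  sSup {c : Cardinal | ∃ F : Set C(K, ℝ), IsIrredundantC K F ∧ c = #F}

/-- The characteristic function `χ_{[b]} ∈ C(K_A)` of the clopen subset of the Stone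
space determined by `b ∈ A`. -/
noncomputable def stoneChar (A : Type) [BooleanAlgebra A] (b : A) : C(StoneSpace A, ℝ) :=
  ⟨fun x => if x.1 b then 1 else 0, by
    have h : Continuous fun x : StoneSpace A => x.1 b :=
      (continuous_apply b).comp continuous_subtype_val
    exact (continuous_of_discreteTopology
      (f := fun v : Bool => if v then (1 : ℝ) else 0)).comp h⟩


section Aux
variable {A : Type} [BooleanAlgebra A]

def FIPset (M : Set A) : Prop := ∀ t : Finset A, ↑t ⊆ M → t.inf id ≠ ⊥

lemma inf_bot_le_compl {a b : A} (h : a ⊓ b = ⊥) : a ≤ bᶜ :=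
  le_compl_iff_disjoint_right.mpr (disjoint_iff.mpr h)

lemma fip_pair {M : Set A} (h : FIPset M) {a b : A} (ha : a ∈ M) (hb : b ∈ M)
    (hab : a ⊓ b = ⊥) : False := by
  classical
  have := h {a, b} (by simp [Set.insert_subset_iff, ha, hb])
  simp [Finset.inf_insert, hab] at this

lemma fip_triple {M : Set A} (h : FIPset M) {a b c : A} (ha : a ∈ M) (hb : b ∈ M)
    (hc : c ∈ M) (habc : a ⊓ b ⊓ c = ⊥) : False := by
  classical
  have := h {a, b, c} (by simp [Set.insert_subset_iff, ha, hb, hc])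
  simp [Finset.inf_insert, ← inf_assoc, habc] at this

lemma chain_fip : ∀ c ⊆ {M : Set A | FIPset M}, IsChain (fun x1 x2 => x1 ⊆ x2) c →
    c.Nonempty → ∃ ub ∈ {M : Set A | FIPset M}, ∀ s ∈ c, s ⊆ ub := by
  classical
  intro c hc hchain hne
  refine ⟨⋃₀ c, ?_, fun s hs => Set.subset_sUnion_of_mem hs⟩
  intro t ht
  have : ∃ m ∈ c, ↑t ⊆ m := by
    induction t using Finset.induction with
    | empty => exact ⟨hne.choose, hne.choose_spec, by simp⟩
    | @insert a s hx ih =>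
      obtain ⟨m, hm, hsm⟩ := ih (subset_trans (by simp [Set.subset_insert]) ht)
      obtain ⟨m', hm', ham'⟩ := ht (by simp : (a : A) ∈ (↑(insert a s) : Set A))
      rcases hchain.total hm hm' with h | h
      · exact ⟨m', hm', by
          simp only [Finset.coe_insert, Set.insert_subset_iff]
          exact ⟨ham', hsm.trans h⟩⟩
      · exact ⟨m, hm, by
          simp only [Finset.coe_insert, Set.insert_subset_iff]
          exact ⟨h ham', hsm⟩⟩
  obtain ⟨m, hm, htm⟩ := this
  exact hc hm t htm

lemma exists_hom (G : Set A) (hG : FIPset G) :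
    ∃ X : StoneSpace A, ∀ g ∈ G, X.1 g = true := by
  classical
  obtain ⟨M, hGM, hM⟩ := zorn_subset_nonempty {M : Set A | FIPset M} chain_fip G hG
  have hfip : FIPset M := hM.prop
  -- totality
  have htot : ∀ a : A, a ∉ M → aᶜ ∈ M := by
    intro a ha
    -- M ∪ {a} is not FIP
    have hncompl : ¬ FIPset (insert a M) := by
      intro hf
      have : insert a M = M := hM.eq_of_superset hf (Set.subset_insert a M)
      exact ha (this ▸ Set.mem_insert a M)
    obtain ⟨t, htM, htb⟩ := by
      simpa [FIPset, not_forall] using hncompl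
    -- inf of t.erase a is ≤ aᶜ
    have h1 : a ⊓ (t.erase a).inf id = ⊥ := by
      have hsub : t ⊆ insert a (t.erase a) := by
        intro x hx
        by_cases hxa : x = a
        · simp [hxa]
        · simp [Finset.mem_erase, hxa, hx]
      have hle : (insert a (t.erase a)).inf id ≤ t.inf id :=
        Finset.inf_mono hsub (f := id)
      rw [Finset.inf_insert, htb] at hle
      exact le_bot_iff.mp hle
    -- so inf(erase) ≤ aᶜ ; M ∪ {aᶜ} is FIP
    have herase : ↑(t.erase a) ⊆ M := by
      intro x hx
      simp only [Finset.coe_erase, Set.mem_diff, Set.mem_singleton_iff] at hx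
      rcases htM hx.1 with h | h
      · exact absurd h hx.2
      · exact h
    have hEa : (t.erase a).inf id ≤ aᶜ :=
      inf_bot_le_compl (by rwa [inf_comm] at h1)
    have hfipc : FIPset (insert aᶜ M) := by
      intro u hu hub
      have hsub : u ⊆ insert aᶜ (u.erase aᶜ) := by
        intro x hx
        by_cases hxa : x = aᶜ
        · simp [hxa]
        · simp [Finset.mem_erase, hxa, hx]
      have hle : (insert aᶜ (u.erase aᶜ)).inf id ≤ u.inf id :=
        Finset.inf_mono hsub (f := id)
      rw [Finset.inf_insert, hub] at hle
      have h2 : aᶜ ⊓ (u.erase aᶜ).inf id = ⊥ := le_bot_iff.mp hle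
      have huerase : ↑(u.erase aᶜ) ⊆ M := by
        intro x hx
        simp only [Finset.coe_erase, Set.mem_diff, Set.mem_singleton_iff] at hx
        rcases hu hx.1 with h | h
        · exact absurd h hx.2
        · exact h
      -- inf(uerase) ≤ a
      have hUa : (u.erase aᶜ).inf id ≤ a := by
        rw [inf_comm] at h2
        simpa using inf_bot_le_compl h2
      -- combine: inf over (t.erase a) ∪ (u.erase aᶜ) = ⊥
      have hcomb : ((t.erase a) ∪ (u.erase aᶜ)).inf id = ⊥ := by
        rw [Finset.inf_union]
        exact le_bot_iff.mp (le_trans (inf_le_inf hEa hUa) (by simp))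
      exact hfip _ (by rw [Finset.coe_union]; exact Set.union_subset herase huerase) hcomb
    have : insert aᶜ M = M := hM.eq_of_superset hfipc (Set.subset_insert _ M)
    exact this ▸ Set.mem_insert aᶜ M
  -- basic membership facts
  have hbot : ⊥ ∉ M := fun h => hfip {⊥} (by simpa) (by simp)
  have hnn : ∀ a ∈ M, ∀ b, a ≤ b → b ∈ M := by
    intro a ha b hab
    by_contra hb
    exact fip_pair hfip ha (htot b hb)
      (le_bot_iff.mp ((inf_le_inf hab le_rfl).trans (by simp)))
  have hmem_inf : ∀ a b : A, (a ⊓ b ∈ M) ↔ (a ∈ M ∧ b ∈ M) := by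
    intro a b
    constructor
    · intro h
      constructor
      · exact hnn _ h a inf_le_left
      · exact hnn _ h b inf_le_right
    · rintro ⟨ha, hb⟩
      by_contra h
      have := fip_triple hfip ha hb (htot (a ⊓ b) h)
      rw [compl_inf] at this
      exact this (by rw [← compl_inf, inf_compl_eq_bot])
  have hmem_sup : ∀ a b : A, (a ⊔ b ∈ M) ↔ (a ∈ M ∨ b ∈ M) := by
    intro a b
    constructor
    · intro h
      by_contra hcon
      push_neg at hcon
      refine fip_triple hfip h (htot a hcon.1) (htot b hcon.2) ?_
      rw [inf_assoc, ← compl_sup, inf_compl_eq_bot]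
    · rintro (ha | hb)
      · exact hnn _ ha _ le_sup_left
      · exact hnn _ hb _ le_sup_right
  refine ⟨⟨fun a => decide (a ∈ M), ?_, ?_, ?_⟩, ?_⟩
  · simp [hbot]
  · have : ⊤ ∈ M := by
      by_contra h
      have := htot ⊤ h
      simp at this
      exact hbot this
    simp [this]
  · intro a b
    constructor
    · by_cases ha : a ∈ M <;> by_cases hb : b ∈ M <;>
        simp [ha, hb, hmem_inf a b]
    · by_cases ha : a ∈ M <;> by_cases hb : b ∈ M <;>
        simp [ha, hb, hmem_sup a b]
  · intro g hg
    simp [hGM hg]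

lemma hom_compl (X : StoneSpace A) (a : A) : X.1 aᶜ = !X.1 a := by
  have h1 := (X.2.2.2 a aᶜ).1
  have h2 := (X.2.2.2 a aᶜ).2
  rw [inf_compl_eq_bot, X.2.1] at h1
  rw [sup_compl_eq_top, X.2.2.1] at h2
  cases hA : X.1 a <;> cases hC : X.1 aᶜ <;> rw [hA, hC] at h1 h2 <;>
    first | rfl | simp at h1 h2

lemma sep_step2 (S : A → Prop) (hSinf : ∀ a b, S a → S b → S (a ⊓ b)) (hStop : S ⊤)
    (w : StoneSpace A) (e : A)
    (he : ∀ u, S u → w.1 u = true → u ⊓ e ≠ ⊥) :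
    ∃ X : StoneSpace A, X.1 e = true ∧ ∀ a, S a → S aᶜ → X.1 a = w.1 a := by
  classical
  set G : Set A := {a | S a ∧ w.1 a = true} ∪ {e} with hGdef
  have key : ∀ t : Finset A, ↑t ⊆ G → ∃ u, S u ∧ w.1 u = true ∧
      (t.inf id = u ∨ t.inf id = u ⊓ e) := by
    intro t ht
    induction t using Finset.induction with
    | empty => exact ⟨⊤, hStop, w.2.2.1, Or.inl (by simp)⟩
    | @insert a s ha ih =>
      obtain ⟨u, hSu, hwu, hu⟩ := ih (subset_trans (by simp [Set.subset_insert]) ht)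
      have haG : a ∈ G := ht (by simp)
      rw [Finset.inf_insert]
      rcases haG with haG | haG
      · refine ⟨a ⊓ u, hSinf _ _ haG.1 hSu, ?_, ?_⟩
        · rw [(w.2.2.2 a u).1, haG.2, hwu]; rfl
        · rcases hu with hu | hu
          · exact Or.inl (by rw [hu]; rfl)
          · exact Or.inr (by rw [hu, ← inf_assoc]; rfl)
      · simp only [Set.mem_singleton_iff] at haG
        subst haG
        have habs : ∀ p q : A, p ⊓ (q ⊓ p) = q ⊓ p := fun p q => by
          rw [← inf_assoc, inf_comm p q, inf_assoc, inf_idem]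
        rcases hu with hu | hu
        · exact ⟨u, hSu, hwu, Or.inr (by rw [hu]; exact inf_comm _ _)⟩
        · exact ⟨u, hSu, hwu, Or.inr (by rw [hu]; exact habs _ _)⟩
  have hfip : ∀ t : Finset A, ↑t ⊆ G → t.inf id ≠ ⊥ := by
    intro t ht
    obtain ⟨u, hSu, hwu, hu | hu⟩ := key t ht
    · rw [hu]
      intro hbot
      subst hbot
      rw [w.2.1] at hwu; exact Bool.false_ne_true hwu
    · rw [hu]
      exact he u hSu hwu
  obtain ⟨X, hX⟩ := exists_hom G hfip
  refine ⟨X, hX e (Or.inr rfl), ?_⟩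
  intro a hSa hSac
  by_cases hwa : w.1 a = true
  · rw [hX a (Or.inl ⟨hSa, hwa⟩), hwa]
  · have hwac : w.1 aᶜ = true := by
      rw [hom_compl]; simp [Bool.not_eq_true] at hwa; simp [hwa]
    have := hX aᶜ (Or.inl ⟨hSac, hwac⟩)
    rw [hom_compl] at this
    simp only [Bool.not_eq_true'] at this
    rw [this]
    simp [Bool.not_eq_true] at hwa
    rw [hwa]

lemma sep {s : Set A} {b : A} (hb : ¬ InBoolSubalgebra s b) :
    ∃ X Y : StoneSpace A,
      (∀ a, InBoolSubalgebra s a → X.1 a = Y.1 a) ∧ X.1 b = true ∧ Y.1 b = false := by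
  classical
  set S : A → Prop := InBoolSubalgebra s with hS
  have hSinf : ∀ a c, S a → S c → S (a ⊓ c) := fun a c => InBoolSubalgebra.inf
  have hSsup : ∀ a c, S a → S c → S (a ⊔ c) := fun a c => InBoolSubalgebra.sup
  have hStop : S ⊤ := InBoolSubalgebra.top
  have hSbot : S ⊥ := InBoolSubalgebra.bot
  set J : A → Prop := fun a => ∃ c d, S c ∧ S d ∧ c ≤ b ∧ d ≤ bᶜ ∧ a ≤ c ⊔ d with hJ
  have hJbot : J ⊥ := ⟨⊥, ⊥, hSbot, hSbot, bot_le, bot_le, by simp⟩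
  have hJsup : ∀ a c, J a → J c → J (a ⊔ c) := by
    rintro a c ⟨c1, d1, h1, h2, h3, h4, h5⟩ ⟨c2, d2, g1, g2, g3, g4, g5⟩
    refine ⟨c1 ⊔ c2, d1 ⊔ d2, hSsup _ _ h1 g1, hSsup _ _ h2 g2,
      sup_le h3 g3, sup_le h4 g4, ?_⟩
    calc a ⊔ c ≤ (c1 ⊔ d1) ⊔ (c2 ⊔ d2) := sup_le_sup h5 g5
    _ = c1 ⊔ c2 ⊔ (d1 ⊔ d2) := sup_sup_sup_comm c1 d1 c2 d2
  have hJtop : ¬ J ⊤ := by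
    rintro ⟨c, d, hc, hd, hcb, hdb, htop⟩
    apply hb
    have hbc : b = c := by
      refine le_antisymm ?_ hcb
      have h1 : b = b ⊓ (c ⊔ d) := by
        rw [inf_eq_left.mpr (le_trans le_top htop)]
      rw [h1, inf_sup_left]
      have h2 : b ⊓ d = ⊥ := by
        refine le_bot_iff.mp ?_
        calc b ⊓ d ≤ b ⊓ bᶜ := inf_le_inf le_rfl hdb
        _ = ⊥ := inf_compl_eq_bot
      rw [h2, sup_bot_eq]
      exact inf_le_right
    rw [hbc]; exact hc
  -- step 1 : hom w vanishing on J
  have hfipJ : ∀ t : Finset A, ↑t ⊆ {x | ∃ a, J a ∧ x = aᶜ} → t.inf id ≠ ⊥ := by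
    intro t ht
    have key : ∃ a, J a ∧ t.inf id = aᶜ := by
      clear hb
      induction t using Finset.induction with
      | empty => exact ⟨⊥, hJbot, by simp⟩
      | @insert x u hx ih =>
        obtain ⟨a, hJa, ha⟩ := ih (subset_trans (by simp [Set.subset_insert]) ht)
        obtain ⟨a', hJa', hx'⟩ := ht (by simp : (x : A) ∈ (↑(insert x u) : Set A))
        refine ⟨a' ⊔ a, hJsup _ _ hJa' hJa, ?_⟩
        rw [Finset.inf_insert, ha, compl_sup]
        rw [hx']; rfl
    obtain ⟨a, hJa, ha⟩ := key
    rw [ha]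
    intro hcon
    rw [compl_eq_bot] at hcon
    exact hJtop (hcon ▸ hJa)
  obtain ⟨w, hw⟩ := exists_hom _ hfipJ
  have hwJ : ∀ a, J a → w.1 a = false := by
    intro a hJa
    have := hw aᶜ ⟨a, hJa, rfl⟩
    rw [hom_compl] at this
    simpa using this
  -- step 2 for b
  obtain ⟨X, hXb, hXw⟩ := sep_step2 S hSinf hStop w b (by
    intro u hSu hwu hub
    have : J u := ⟨⊥, u, hSbot, hSu, bot_le, inf_bot_le_compl hub, by simp⟩
    rw [hwJ u this] at hwu; exact Bool.false_ne_true hwu)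
  -- step 2 for bᶜ
  obtain ⟨Y, hYb, hYw⟩ := sep_step2 S hSinf hStop w bᶜ (by
    intro u hSu hwu hub
    have hub' : u ≤ b := by simpa using inf_bot_le_compl hub
    have : J u := ⟨u, ⊥, hSu, hSbot, hub', bot_le, by simp⟩
    rw [hwJ u this] at hwu; exact Bool.false_ne_true hwu)
  refine ⟨X, Y, ?_, hXb, ?_⟩
  · intro a hSa
    rw [hXw a hSa (InBoolSubalgebra.compl hSa), hYw a hSa (InBoolSubalgebra.compl hSa)]
  · have := hom_compl Y b
    rw [hYb] at this
    simpa using this.symm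

end Aux

lemma stoneChar_apply (A : Type) [BooleanAlgebra A] (b : A) (x : StoneSpace A) :
    stoneChar A b x = if x.1 b then 1 else 0 := rfl

/-- the non-unital subalgebra of functions agreeing at two points -/
def eqAt (K : Type) [TopologicalSpace K] (X Y : K) : NonUnitalSubalgebra ℝ C(K, ℝ) where
  carrier := {g | g X = g Y}
  add_mem' := by intro a b ha hb; simp only [Set.mem_setOf_eq] at *; simp [ha, hb]
  mul_mem' := by intro a b ha hb; simp only [Set.mem_setOf_eq] at *; simp [ha, hb]
  smul_mem' := by intro c a ha; simp only [Set.mem_setOf_eq] at *; simp [ha]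
  zero_mem' := by simp

lemma irred_image (A : Type) [BooleanAlgebra A] (B : Set A) (hB : IsIrredundantBA A B) :
    IsIrredundantC (StoneSpace A) (stoneChar A '' B) := by
  rintro f ⟨b, hbB, rfl⟩ hmem
  obtain ⟨X, Y, hagree, hXb, hYb⟩ := sep (hB b hbB)
  have hgen : (stoneChar A '' B) \ {stoneChar A b} ⊆ (eqAt (StoneSpace A) X Y : Set C(StoneSpace A, ℝ)) := by
    rintro g ⟨⟨b', hb'B, rfl⟩, hgne⟩
    have hb'ne : b' ≠ b := by
      intro h; exact hgne (by rw [h]; rfl)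
    have : X.1 b' = Y.1 b' := hagree b' (InBoolSubalgebra.base ⟨hb'B, hb'ne⟩)
    show stoneChar A b' X = stoneChar A b' Y
    rw [stoneChar_apply, stoneChar_apply, this]
  have hclosed : IsClosed ((eqAt (StoneSpace A) X Y : Set C(StoneSpace A, ℝ))) :=
    isClosed_eq (ContinuousEvalConst.continuous_eval_const X)
      (ContinuousEvalConst.continuous_eval_const Y)
  have hsub : closure (NonUnitalAlgebra.adjoin ℝ ((stoneChar A '' B) \ {stoneChar A b}) :
      Set C(StoneSpace A, ℝ)) ⊆ (eqAt (StoneSpace A) X Y : Set C(StoneSpace A, ℝ)) :=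
    closure_minimal (NonUnitalAlgebra.adjoin_le hgen) hclosed
  have : stoneChar A b X = stoneChar A b Y := hsub hmem
  rw [stoneChar_apply, stoneChar_apply, hXb, hYb] at this
  simpa using this

lemma stoneChar_injOn (A : Type) [BooleanAlgebra A] (B : Set A)
    (hB : IsIrredundantBA A B) : Set.InjOn (stoneChar A) B := by
  intro b1 h1 b2 h2 heq
  by_contra hne
  obtain ⟨X, Y, hagree, hXb, hYb⟩ := sep (hB b1 h1)
  have hb2 : X.1 b2 = Y.1 b2 :=
    hagree b2 (InBoolSubalgebra.base ⟨h2, fun h => hne ((Set.mem_singleton_iff.mp h).symm ▸ rfl)⟩)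
  have e1 : stoneChar A b1 X = stoneChar A b2 X := by rw [heq]
  have e2 : stoneChar A b1 Y = stoneChar A b2 Y := by rw [heq]
  rw [stoneChar_apply, stoneChar_apply, hXb] at e1
  rw [stoneChar_apply, stoneChar_apply, hYb] at e2
  have hX2 : X.1 b2 = true := by
    by_contra h
    simp only [Bool.not_eq_true] at h
    rw [h] at e1; simpa using e1
  have hY2 : Y.1 b2 = false := by
    by_contra h
    simp only [Bool.not_eq_false] at h
    rw [h] at e2; simpa using e2
  rw [hX2, hY2] at hb2
  simp at hb2

/-- If `B` is an irredundant subset of a Boolean algebra `A`, then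
`{χ_{[b]} : b ∈ B}` is an irredundant subset of `C(K_A)`; consequently
`irr(A) ≤ bd(K_A)`. -/
theorem irredundant_stoneChar_image_and_irr_le_bd (A : Type) [BooleanAlgebra A]
    (B : Set A) (hB : IsIrredundantBA A B) :
    IsIrredundantC (StoneSpace A) (stoneChar A '' B) ∧ irrBA A ≤ bd (StoneSpace A) := by
  refine ⟨irred_image A B hB, ?_⟩
  have hbdd : BddAbove {c : Cardinal | ∃ F : Set C(StoneSpace A, ℝ), IsIrredundantC (StoneSpace A) F ∧ c = #F} := by
    refine ⟨#(C(StoneSpace A, ℝ)), ?_⟩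
    rintro c ⟨F, _, rfl⟩
    exact Cardinal.mk_set_le F
  refine csSup_le ⟨#(∅ : Set A), ∅, fun b hb => absurd hb (Set.notMem_empty b), rfl⟩ ?_
  rintro c ⟨B', hB', rfl⟩
  refine le_csSup hbdd ⟨stoneChar A '' B', irred_image A B' hB', ?_⟩
  exact (Cardinal.mk_image_eq_of_injOn _ _ (stoneChar_injOn A B' hB')).symm
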